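/- Let Φ ∈ ℝ^{M×N} with ‖ΦᵀΦ‖ ≤ L (operator norm), let φ: ℝᴺ → ℝ be convex, λ > 0, and F(x) = (1/2)‖Φx − y‖²₂ + λφ(x). For step size ρ = 1/L, the ISTA iterates x^{(k)} = prox_{ρλφ}(x^{(k−1)} − ρΦᵀ(Φx^{(k−1)} − y)) satisfy F(x^{(k)}) ≤ F(x^{(k−1)}) for every k ≥ 1. -/

import Mathlib

/-!
A proximal gradient step decreases the objective as soon as the smooth part `f` lies below its
quadratic model `f a + ⟪∇f a, z - a⟫ + (L/2)‖z - a‖²` and the step size is `1/L`: comparing the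
prox point `z` with the competitor `a` in the prox minimization gives
`⟪∇f a, z - a⟫ + (L/2)‖z - a‖² ≤ ψ a - ψ z`. For `f x = ½‖Φx - y‖²` the quadratic model is
exact up to the term `½⟪ΦᵀΦ w, w⟫`, which the operator norm bound on `ΦᵀΦ` controls by `(L/2)‖w‖²`.
-/

open Finset Matrix RealInnerProductSpace

section ProxGradient

variable {E : Type*} [NormedAddCommGroup E] [InnerProductSpace ℝ E]

def IsProxPoint (ψ : E → ℝ) (r z : E) : Prop :=
  ∀ u, 1 / 2 * ‖z - r‖ ^ 2 + ψ z ≤ 1 / 2 * ‖u - r‖ ^ 2 + ψ u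

lemma IsProxPoint.inner_add_le {ψ : E → ℝ} {a g z : E} {ρ : ℝ}
    (hz : IsProxPoint (fun u => ρ * ψ u) (a - ρ • g) z) :
    ρ * ⟪g, z - a⟫ + 1 / 2 * ‖z - a‖ ^ 2 ≤ ρ * (ψ a - ψ z) := by
  have h := hz a
  rw [show z - (a - ρ • g) = (z - a) + ρ • g by abel, sub_sub_cancel, norm_add_sq_real,
    inner_smul_right, norm_smul, Real.norm_eq_abs, mul_pow, sq_abs, real_inner_comm] at h
  linarith

theorem proxGrad_descent {f ψ : E → ℝ} {a g z : E} {L ρ : ℝ} (hL : 0 ≤ L) (hρL : ρ * L = 1)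
    (hf : f z ≤ f a + ⟪g, z - a⟫ + L / 2 * ‖z - a‖ ^ 2)
    (hz : IsProxPoint (fun u => ρ * ψ u) (a - ρ • g) z) :
    f z + ψ z ≤ f a + ψ a := by
  have hstep : ⟪g, z - a⟫ + L / 2 * ‖z - a‖ ^ 2 ≤ ψ a - ψ z :=
    calc ⟪g, z - a⟫ + L / 2 * ‖z - a‖ ^ 2
        = L * (ρ * ⟪g, z - a⟫ + 1 / 2 * ‖z - a‖ ^ 2) := by
          linear_combination (-⟪g, z - a⟫) * hρL
      _ ≤ L * (ρ * (ψ a - ψ z)) := mul_le_mul_of_nonneg_left hz.inner_add_le hL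
      _ = ψ a - ψ z := by linear_combination (ψ a - ψ z) * hρL
  linarith

end ProxGradient

section LeastSquares

variable {m n : Type*} [Fintype m] [Fintype n]

lemma sum_sq_sub_mulVec_add (Φ : Matrix m n ℝ) (y : m → ℝ) (a w : n → ℝ) :
    ∑ i, ((Φ *ᵥ (a + w)) i - y i) ^ 2 =
      ∑ i, ((Φ *ᵥ a) i - y i) ^ 2 + 2 * (Φᵀ *ᵥ (Φ *ᵥ a - y) ⬝ᵥ w) + (Φᵀ * Φ) *ᵥ w ⬝ᵥ w := by
  have hcross : Φᵀ *ᵥ (Φ *ᵥ a - y) ⬝ᵥ w = (Φ *ᵥ a - y) ⬝ᵥ Φ *ᵥ w := by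
    rw [dotProduct_mulVec, mulVec_transpose]
  have hquad : (Φᵀ * Φ) *ᵥ w ⬝ᵥ w = Φ *ᵥ w ⬝ᵥ Φ *ᵥ w := by
    rw [← mulVec_mulVec, mulVec_transpose, ← dotProduct_mulVec]
  rw [hcross, hquad, dotProduct, dotProduct, mul_sum, ← sum_add_distrib, ← sum_add_distrib]
  refine sum_congr rfl fun i _ => ?_
  simp only [mulVec_add, Pi.add_apply, Pi.sub_apply]
  ring

lemma mulVec_dotProduct_le {B : Matrix n n ℝ} {L : ℝ}
    (hB : ∀ v : EuclideanSpace ℝ n, ‖(WithLp.toLp 2 (B *ᵥ v) : EuclideanSpace ℝ n)‖ ≤ L * ‖v‖)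
    (w : EuclideanSpace ℝ n) : B *ᵥ w ⬝ᵥ w ≤ L * ‖w‖ ^ 2 :=
  calc B *ᵥ w ⬝ᵥ w = ⟪(WithLp.toLp 2 (B *ᵥ w) : EuclideanSpace ℝ n), w⟫ := by
        rw [EuclideanSpace.inner_eq_star_dotProduct, star_trivial, dotProduct_comm]
    _ ≤ ‖(WithLp.toLp 2 (B *ᵥ w) : EuclideanSpace ℝ n)‖ * ‖w‖ := real_inner_le_norm _ _
    _ ≤ L * ‖w‖ * ‖w‖ := by gcongr; exact hB w
    _ = L * ‖w‖ ^ 2 := by ring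

noncomputable def leastSquares (Φ : Matrix m n ℝ) (y : m → ℝ) (x : EuclideanSpace ℝ n) : ℝ :=
  1 / 2 * ∑ i, ((Φ *ᵥ x) i - y i) ^ 2

theorem leastSquares_le_quadratic {Φ : Matrix m n ℝ} {L : ℝ}
    (hΦ : ∀ v : EuclideanSpace ℝ n,
      ‖(WithLp.toLp 2 ((Φᵀ * Φ) *ᵥ v) : EuclideanSpace ℝ n)‖ ≤ L * ‖v‖)
    (y : m → ℝ) (a z : EuclideanSpace ℝ n) :
    leastSquares Φ y z ≤ leastSquares Φ y a
      + ⟪(WithLp.toLp 2 (Φᵀ *ᵥ (Φ *ᵥ a - y)) : EuclideanSpace ℝ n), z - a⟫ + L / 2 * ‖z - a‖ ^ 2 := by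
  obtain ⟨w, rfl⟩ : ∃ w, z = a + w := ⟨z - a, by abel⟩
  rw [add_sub_cancel_left, leastSquares, leastSquares, WithLp.ofLp_add]
  have hsplit := sum_sq_sub_mulVec_add Φ y a w
  have hinner : ⟪(WithLp.toLp 2 (Φᵀ *ᵥ (Φ *ᵥ a - y)) : EuclideanSpace ℝ n), w⟫
      = Φᵀ *ᵥ (Φ *ᵥ a - y) ⬝ᵥ w := by
    rw [EuclideanSpace.inner_eq_star_dotProduct, star_trivial, dotProduct_comm]
  have hquad := mulVec_dotProduct_le hΦ w
  rw [hinner]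
  linarith

end LeastSquares

theorem ista_descent_general
    (M N : ℕ) (Φ : Matrix (Fin M) (Fin N) ℝ) (y : Fin M → ℝ)
    (L : ℝ) (hL : 0 < L)
    (hΦ : ∀ v : EuclideanSpace ℝ (Fin N),
      ‖(show EuclideanSpace ℝ (Fin N) from WithLp.toLp 2 ((Φᵀ * Φ).mulVec v))‖ ≤ L * ‖v‖)
    (lam : ℝ)
    (φ : EuclideanSpace ℝ (Fin N) → ℝ)
    (ρ : ℝ) (hρ : ρ = 1 / L)
    (F : EuclideanSpace ℝ (Fin N) → ℝ)
    (hF : F = fun (x : EuclideanSpace ℝ (Fin N)) => (1 / 2) * ∑ i, (Φ.mulVec x i - y i) ^ 2 + lam * φ x)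
    (p : EuclideanSpace ℝ (Fin N) → EuclideanSpace ℝ (Fin N))
    (hp : ∀ r u, (1 / 2) * ‖p r - r‖ ^ 2 + ρ * lam * φ (p r)
        ≤ (1 / 2) * ‖u - r‖ ^ 2 + ρ * lam * φ u)
    (x : ℕ → EuclideanSpace ℝ (Fin N))
    (hx : ∀ k : ℕ, x (k + 1)
        = p (x k - ρ • (show EuclideanSpace ℝ (Fin N) from
            WithLp.toLp 2 (Φᵀ.mulVec (Φ.mulVec (x k) - y))))) :
    ∀ k : ℕ, F (x (k + 1)) ≤ F (x k) := by
  intro k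
  have hρL : ρ * L = 1 := by rw [hρ, one_div_mul_cancel hL.ne']
  have hprox : IsProxPoint (fun u => ρ * (lam * φ u)) _ (x (k + 1)) := fun u => by
    simpa only [hx k, mul_assoc] using hp _ u
  subst hF
  exact proxGrad_descent hL.le hρL (leastSquares_le_quadratic hΦ y (x k) (x (k + 1))) hprox

/-- **Descent property of ISTA.** If `‖ΦᵀΦ‖ ≤ L` (operator norm), `φ` is convex, and
the iterates follow `x⁽ᵏ⁾ = prox_{ρλφ}(x⁽ᵏ⁻¹⁾ − ρΦᵀ(Φx⁽ᵏ⁻¹⁾ − y))` with step size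
`ρ = 1/L`, then `F(x⁽ᵏ⁾) ≤ F(x⁽ᵏ⁻¹⁾)` for all `k ≥ 1`, where
`F(x) = (1/2)‖Φx − y‖₂² + λφ(x)`. -/
theorem ista_descent
    (M N : ℕ) (Φ : Matrix (Fin M) (Fin N) ℝ) (y : Fin M → ℝ)
    (L : ℝ) (hL : 0 < L)
    (hΦ : ∀ v : EuclideanSpace ℝ (Fin N),
      ‖(show EuclideanSpace ℝ (Fin N) from WithLp.toLp 2 ((Φᵀ * Φ).mulVec v))‖ ≤ L * ‖v‖)
    (lam : ℝ) (hlam : 0 < lam)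
    (φ : EuclideanSpace ℝ (Fin N) → ℝ) (hφ : ConvexOn ℝ Set.univ φ)
    (ρ : ℝ) (hρ : ρ = 1 / L)
    (F : EuclideanSpace ℝ (Fin N) → ℝ)
    (hF : F = fun (x : EuclideanSpace ℝ (Fin N)) => (1 / 2) * ∑ i, (Φ.mulVec x i - y i) ^ 2 + lam * φ x)
    (p : EuclideanSpace ℝ (Fin N) → EuclideanSpace ℝ (Fin N))
    (hp : ∀ r u, (1 / 2) * ‖p r - r‖ ^ 2 + ρ * lam * φ (p r)
        ≤ (1 / 2) * ‖u - r‖ ^ 2 + ρ * lam * φ u)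
    (x : ℕ → EuclideanSpace ℝ (Fin N))
    (hx : ∀ k : ℕ, x (k + 1)
        = p (x k - ρ • (show EuclideanSpace ℝ (Fin N) from
            WithLp.toLp 2 (Φᵀ.mulVec (Φ.mulVec (x k) - y))))) :
    ∀ k : ℕ, F (x (k + 1)) ≤ F (x k) :=
  ista_descent_general M N Φ y L hL hΦ lam φ ρ hρ F hF p hp x hx
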